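/- arXiv:0905.0595 — 2 statements merged into one kernel-verified Lean document; each statement's English description precedes it below -/
import Mathlib

section
/- For any class R of morphisms in a cocomplete category M, the class □R is closed under transfinite composition: the composite of a transfinite chain of morphisms, each lying in □R, again lies in □R. -/
open CategoryTheory CategoryTheory.Limits

universe w v u

namespace Paper

variable {K : Type u} [Category.{v} K]

/-- The class of morphisms with the right lifting property w.r.t. every member of `L`. -/
def rlp (L : MorphismProperty K) : MorphismProperty K :=
  fun _ _ g => ∀ ⦃A B : K⦄ (f : A ⟶ B), L f → HasLiftingProperty f g

/-- The class of morphisms with the left lifting property w.r.t. every member of `R`. -/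
def llp (R : MorphismProperty K) : MorphismProperty K :=
  fun _ _ f => ∀ ⦃X Y : K⦄ (g : X ⟶ Y), R g → HasLiftingProperty f g

/-- `f` is a retract of `f'` in the arrow category. -/
def IsRetractArrow {A B X Y : K} (f : A ⟶ B) (f' : X ⟶ Y) : Prop :=
  ∃ (i : Arrow.mk f ⟶ Arrow.mk f') (r : Arrow.mk f' ⟶ Arrow.mk f), i ≫ r = 𝟙 (Arrow.mk f)

/-- The inclusion functor of the initial segment below `j`. -/
def below {J : Type w} [Preorder J] (j : J) : Set.Iio j ⥤ J :=
  Monotone.functor (f := (Subtype.val : Set.Iio j → J)) (fun _ _ h => h)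

/-- The canonical cocone of the restriction of a chain `F` below `j`, with point `F.obj j`. -/
def restrictionCocone {J : Type w} [Preorder J] (F : J ⥤ K) (j : J) :
    Cocone (below j ⋙ F) where
  pt := F.obj j
  ι :=
    { app := fun i => F.map (homOfLE i.2.le)
      naturality := by
        intro i i' g
        dsimp [below]
        rw [← F.map_comp, Category.comp_id]
        rfl }

/-- A chain is smooth (continuous) if at every limit ordinal stage it is the colimit of the
preceding stages. -/
def IsSmooth {J : Type w} [Preorder J] (F : J ⥤ K) : Prop :=
  ∀ j : J, Order.IsSuccLimit j → Nonempty (IsColimit (restrictionCocone F j))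

/-- `f` is a transfinite composition of morphisms belonging to `S`. -/
def IsTransfiniteCompositionOf (S : MorphismProperty K) {X Y : K} (f : X ⟶ Y) : Prop :=
  ∃ (J : Type v) (_ : LinearOrder J) (_ : OrderBot J) (_ : SuccOrder J)
    (_ : WellFoundedLT J) (F : J ⥤ K) (c : Cocone F) (_ : IsColimit c)
    (hX : F.obj ⊥ = X) (hY : c.pt = Y),
    IsSmooth F ∧ (∀ j : J, ¬IsMax j → S (F.map (homOfLE (Order.le_succ j)))) ∧
      f = eqToHom hX.symm ≫ c.ι.app ⊥ ≫ eqToHom hY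

/-- The pushouts (cobase changes) of morphisms belonging to `S`. -/
def pushouts (S : MorphismProperty K) : MorphismProperty K :=
  fun _C _P f' => ∃ (A B : K) (f : A ⟶ B) (g : A ⟶ _C) (g' : B ⟶ _P),
    S f ∧ IsPushout f g g' f'

/-- `X`-cellular morphisms: transfinite compositions of pushouts of morphisms from `X`. -/
def IsCellular (X : MorphismProperty K) {A B : K} (f : A ⟶ B) : Prop :=
  IsTransfiniteCompositionOf (pushouts X) f

/-- A class of morphisms is cofibrantly closed if it is closed under transfinite
compositions, pushouts and retracts in the arrow category. -/
structure CofibrantlyClosed (S : MorphismProperty K) : Prop where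
  retract : ∀ {A B X Y : K} (f : A ⟶ B) (f' : X ⟶ Y), IsRetractArrow f f' → S f' → S f
  pushout : ∀ {A B C P : K} (f : A ⟶ B) (g : A ⟶ C) (g' : B ⟶ P) (f' : C ⟶ P),
    IsPushout f g g' f' → S f → S f'
  transfinite : ∀ {A B : K} (f : A ⟶ B), IsTransfiniteCompositionOf S f → S f

/-- The smallest cofibrantly closed class containing `X`. -/
def cofibrantClosure (X : MorphismProperty K) : MorphismProperty K :=
  fun _ _ f => ∀ S : MorphismProperty K, CofibrantlyClosed S → X ≤ S → S f

/-- The strict image of a class of morphisms under a functor. -/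
def strictImage {L : Type*} [Category L] (F : L ⥤ K) (X : MorphismProperty L) :
    MorphismProperty K :=
  fun A B h => ∃ (A' B' : L) (x : A' ⟶ B'), X x ∧ A = F.obj A' ∧ B = F.obj B' ∧ HEq h (F.map x)

/-- `(L, R)` is a weak factorization system. -/
structure IsWFS (L R : MorphismProperty K) : Prop where
  rlp_eq : R = rlp L
  llp_eq : L = llp R
  fact : ∀ {A B : K} (h : A ⟶ B), ∃ (C : K) (f : A ⟶ C) (g : C ⟶ B), L f ∧ R g ∧ f ≫ g = h


/- `restrictionCocone F j` is definitionally Mathlib's `(Set.principalSegIio j).cocone F`, so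
smoothness is exactly well-order-continuity. -/
theorem IsSmooth.isWellOrderContinuous {J : Type w} [PartialOrder J] {F : J ⥤ K}
    (hF : IsSmooth F) : F.IsWellOrderContinuous :=
  ⟨hF⟩

theorem stmt5_general (R : MorphismProperty K)
    (J : Type v) [LinearOrder J] [OrderBot J] [SuccOrder J] [WellFoundedLT J]
    (F : J ⥤ K) (hsmooth : IsSmooth F)
    (hsucc : ∀ j : J, ¬IsMax j → llp R (F.map (homOfLE (Order.le_succ j))))
    (c : Cocone F) (hc : IsColimit c) : llp R (c.ι.app ⊥) := by
  have := hsmooth.isWellOrderContinuous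
  intro _ _ g hg
  exact HasLiftingProperty.transfiniteComposition.hasLiftingProperty_ι_app_bot hc
    fun j hj => hsucc j hj g hg

theorem stmt5 [HasColimits K] (R : MorphismProperty K)
    (J : Type v) [LinearOrder J] [OrderBot J] [SuccOrder J] [WellFoundedLT J]
    (F : J ⥤ K) (hsmooth : IsSmooth F)
    (hsucc : ∀ j : J, ¬IsMax j → llp R (F.map (homOfLE (Order.le_succ j))))
    (c : Cocone F) (hc : IsColimit c) : llp R (c.ι.app ⊥) :=
  stmt5_general R J F hsmooth hsucc c hc

end Paper
end

section
/- If a cocomplete category K admits a fully faithful functor E : K → Set^{A^op} (A small) with a left adjoint F, and the class of all morphisms of Set^{A^op} is the smallest cofibrantly closed class generated by a set X, then the class of all morphisms of K is the smallest cofibrantly closed class generated by the set F(X); hence (Mor K, Iso) is a cofibrantly generated weak factorization system. -/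
open CategoryTheory CategoryTheory.Limits

universe w v u

namespace Paper

variable {K : Type u} [Category.{v} K]

section Transport

variable {C : Type*} [Category.{v} C]

lemma IsRetractArrow.map (G : C ⥤ K) {A B X Y : C} {f : A ⟶ B} {f' : X ⟶ Y}
    (h : IsRetractArrow f f') : IsRetractArrow (G.map f) (G.map f') := by
  obtain ⟨i, r, hir⟩ := h
  refine ⟨G.mapArrow.map i, G.mapArrow.map r, ?_⟩
  have h := congrArg G.mapArrow.map hir
  rwa [G.mapArrow.map_comp, G.mapArrow.map_id] at h

lemma IsRetractArrow.of_arrowIso {A B X Y : K} {f : A ⟶ B} {f' : X ⟶ Y}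
    (e : Arrow.mk f ≅ Arrow.mk f') : IsRetractArrow f f' :=
  ⟨e.hom, e.inv, e.hom_inv_id⟩

lemma IsTransfiniteCompositionOf.map (G : C ⥤ K) [PreservesColimitsOfSize.{v, v} G]
    {S : MorphismProperty K} {P Q : C} {f : P ⟶ Q}
    (hf : IsTransfiniteCompositionOf (S.inverseImage G) f) :
    IsTransfiniteCompositionOf S (G.map f) := by
  obtain ⟨J, i₁, i₂, i₃, i₄, Φ, c, hc, rfl, rfl, hsmooth, hsucc, rfl⟩ := hf
  refine ⟨J, i₁, i₂, i₃, i₄, Φ ⋙ G, G.mapCocone c, isColimitOfPreserves G hc, rfl, rfl,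
    fun j hj => ?_, hsucc, by simp⟩
  obtain ⟨hl⟩ := hsmooth j hj
  exact ⟨isColimitOfPreserves G hl⟩

lemma CofibrantlyClosed.inverseImage (G : C ⥤ K) [PreservesColimitsOfSize.{v, v} G]
    {S : MorphismProperty K} (hS : CofibrantlyClosed S) :
    CofibrantlyClosed (S.inverseImage G) where
  retract _ _ h := hS.retract _ _ (h.map G)
  pushout _ _ _ _ h := hS.pushout _ _ _ _ (h.map G)
  transfinite _ h := hS.transfinite _ h.map

end Transport

lemma cofibrantClosure_le {X S : MorphismProperty K} (hS : CofibrantlyClosed S) (hXS : X ≤ S) :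
    cofibrantClosure X ≤ S :=
  fun _ _ _ hf => hf S hS hXS

lemma cofibrantClosure_inverseImage_map {C : Type*} [Category.{v} C] (G : C ⥤ K)
    [PreservesColimitsOfSize.{v, v} G] (X : MorphismProperty C) :
    cofibrantClosure X ≤ (cofibrantClosure (strictImage G X)).inverseImage G :=
  fun _ _ _ hf _ hS hXS =>
    cofibrantClosure_le (hS.inverseImage G)
      (fun A B x hx => hXS _ ⟨A, B, x, hx, rfl, rfl, HEq.rfl⟩) _ hf

/-- As `E` is fully faithful the counit is invertible, so every `h` is isomorphic as an arrow
to `F.map (E.map h)`, which lies in the closure because the left adjoint `F` preserves colimits. -/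
theorem cofibrantClosure_strictImage_eq_top {L : Type*} [Category.{v} L] {F : L ⥤ K}
    {E : K ⥤ L} (adj : F ⊣ E) [E.Full] [E.Faithful]
    {X : MorphismProperty L} (hX : cofibrantClosure X = ⊤) :
    cofibrantClosure (strictImage F X) = ⊤ := by
  have : PreservesColimitsOfSize.{v, v} F := adj.leftAdjoint_preservesColimits
  refine top_unique fun K₁ K₂ h _ S hS hXS => ?_
  have hFEh : cofibrantClosure (strictImage F X) (F.map (E.map h)) :=
    cofibrantClosure_inverseImage_map F X _ (hX ▸ trivial)
  have counitIso : Arrow.mk h ≅ Arrow.mk (F.map (E.map h)) :=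
    (Arrow.isoMk (asIso (adj.counit.app K₁)) (asIso (adj.counit.app K₂))).symm
  exact hS.retract _ _ (.of_arrowIso counitIso) (hFEh S hS hXS)

lemma rlp_top_eq_isomorphisms : rlp (⊤ : MorphismProperty K) = .isomorphisms K := by
  ext P Q g
  refine ⟨fun hg => ?_, fun (_ : IsIso g) _ _ _ _ => inferInstance⟩
  have := hg g trivial
  have sq : CommSq (𝟙 P) g g (𝟙 Q) := ⟨by simp⟩
  exact ⟨sq.lift, sq.fac_left, sq.fac_right⟩

lemma llp_isomorphisms_eq_top : llp (.isomorphisms K) = ⊤ := by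
  ext P Q f
  exact ⟨fun _ => trivial, fun _ _ _ g (_ : IsIso g) => inferInstance⟩

lemma isWFS_top_isomorphisms : IsWFS (⊤ : MorphismProperty K) (.isomorphisms K) where
  rlp_eq := rlp_top_eq_isomorphisms.symm
  llp_eq := llp_isomorphisms_eq_top.symm
  fact h := ⟨_, h, 𝟙 _, trivial, .infer_property _, Category.comp_id h⟩

theorem stmt14_general (A : Type v) [SmallCategory A]
    (E : K ⥤ (Aᵒᵖ ⥤ Type v)) [E.Full] [E.Faithful]
    (F : (Aᵒᵖ ⥤ Type v) ⥤ K) (adj : F ⊣ E) (X : MorphismProperty (Aᵒᵖ ⥤ Type v))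
    (hX : cofibrantClosure X = (⊤ : MorphismProperty (Aᵒᵖ ⥤ Type v))) :
    cofibrantClosure (strictImage F X) = (⊤ : MorphismProperty K) ∧
      IsWFS (⊤ : MorphismProperty K) (MorphismProperty.isomorphisms K) :=
  ⟨cofibrantClosure_strictImage_eq_top adj hX, isWFS_top_isomorphisms⟩

theorem stmt14 [HasColimits K] (A : Type v) [SmallCategory A]
    (E : K ⥤ (Aᵒᵖ ⥤ Type v)) [E.Full] [E.Faithful]
    (F : (Aᵒᵖ ⥤ Type v) ⥤ K) (adj : F ⊣ E) (X : MorphismProperty (Aᵒᵖ ⥤ Type v))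
    (hX : cofibrantClosure X = (⊤ : MorphismProperty (Aᵒᵖ ⥤ Type v))) :
    cofibrantClosure (strictImage F X) = (⊤ : MorphismProperty K) ∧
      IsWFS (⊤ : MorphismProperty K) (MorphismProperty.isomorphisms K) :=
  stmt14_general A E F adj X hX

end Paper
end
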